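/- For every ε > 0 there exists a constant C = C(ε) > 0 such that for all integers m > n ≥ 1, C^{-1}·|1/n - 1/m|^{1+ε} ≤ |1/p_n - 1/p_m| ≤ C·|1/n - 1/m|^{0.475}. -/

import Mathlib

/-!
The upper bound is elementary: `p n ≥ n + 1` gives
`(1/p_n - 1/p_m)² ≤ 1/(n+1)² ≤ 1/n - 1/m`, and `0.475 ≤ 1/2`.

For the lower bound, Chebyshev's estimate `π x ≫ x / log x` yields `p n ≤ A n^(1+δ)` for every
`δ > 0`. Together with `p m - p n ≥ m - n` this gives
`1/n - 1/m ≤ A² n^(2δ) (1/p_n - 1/p_m)`, and with `δ = ε/2` the factor `n^ε` is absorbed by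
`(1/n - 1/m)^ε ≤ n^(-ε)`.
-/

open Real Filter

/-- `p n` is the `n`-th prime, with `p 1 = 2`. -/
noncomputable def p (n : ℕ) : ℕ := Nat.nth Nat.Prime (n - 1)

lemma mul_log_two_le_four_mul_primeCounting_mul_log {x : ℕ} (hx : 2 ≤ x) :
    x * log 2 ≤ 4 * x.primeCounting * log x := by
  have hx' : (2 : ℝ) ≤ x := mod_cast hx
  have hlog : 0 < log x := log_pos (by linarith)
  have hπ : (1 : ℝ) ≤ x.primeCounting := by
    have := Nat.monotone_primeCounting hx
    exact_mod_cast (show 1 ≤ Nat.primeCounting 2 by decide).trans this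
  have hsucc : log (x + 1) ≤ log 2 + log x := by
    rw [← log_mul two_ne_zero (by positivity)]
    exact log_le_log (by positivity) (by linarith)
  have hcheb : x * log 2 - log (x + 1) ≤ x.primeCounting * log x :=
    (div_le_iff₀ hlog).mp (Chebyshev.pi_ge x)
  nlinarith [log_pos one_lt_two]

lemma le_rpow_of_le_mul_log {y K δ : ℝ} (hy : 0 < y) (hK : 0 ≤ K) (hδ : 0 < δ)
    (h : y ≤ K * log y) : y ≤ (K * (1 + δ) / δ) ^ (1 + δ) := by
  set z := y ^ (1 + δ)⁻¹ with hz
  have hz0 : 0 < z := rpow_pos_of_pos hy _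
  have hyz : y = z ^ (1 + δ) := by
    rw [hz, ← rpow_mul hy.le, inv_mul_cancel₀ (by linarith), rpow_one]
  have hlog : log y ≤ (1 + δ) * (z ^ δ / δ) := by
    rw [hyz, log_rpow hz0]
    exact mul_le_mul_of_nonneg_left (log_le_rpow_div hz0.le hδ) (by linarith)
  have hzK : z * z ^ δ ≤ K * (1 + δ) / δ * z ^ δ := by
    calc z * z ^ δ = y := by rw [hyz, rpow_one_add' hz0.le (by linarith)]
    _ ≤ K * ((1 + δ) * (z ^ δ / δ)) := h.trans (mul_le_mul_of_nonneg_left hlog hK)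
    _ = K * (1 + δ) / δ * z ^ δ := by ring
  rw [hyz]
  exact rpow_le_rpow hz0.le (le_of_mul_le_mul_right hzK (rpow_pos_of_pos hz0 δ)) (by linarith)

lemma one_div_sub_one_div_le_sq_mul {n m a b K : ℝ} (hn : 0 < n) (hnm : n ≤ m) (hna : n ≤ a)
    (hab : a + (m - n) ≤ b) (haK : a ≤ K * n) : 1 / n - 1 / m ≤ K ^ 2 * (1 / a - 1 / b) := by
  have hm : 0 < m := hn.trans_le hnm
  have ha : 0 < a := hn.trans_le hna
  have hb : 0 < b := by linarith
  have hK : 1 ≤ K := le_of_mul_le_mul_right (by linarith) hn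
  -- `(b - a) / b ≥ (m - n) / (a + (m - n)) ≥ (m - n) / (K * m)`
  have hgap : (m - n) * b ≤ K * m * (b - a) := by
    have h1 : 0 ≤ (b - a - (m - n)) * (K * m - (m - n)) := by
      apply mul_nonneg <;> nlinarith
    have h2 : 0 ≤ (m - n) * (K * n - a) := mul_nonneg (by linarith) (by linarith)
    have h3 : 0 ≤ (m - n) * (m - n) * (K - 1) := by
      apply mul_nonneg <;> nlinarith
    nlinarith
  rw [div_sub_div _ _ hn.ne' hm.ne', div_sub_div _ _ ha.ne' hb.ne', mul_div_assoc',
    div_le_div_iff₀ (by positivity) (by positivity)]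
  nlinarith [mul_le_mul_of_nonneg_left haK (by nlinarith : (0:ℝ) ≤ K * m * (b - a))]

lemma sq_one_div_sub_one_div_le {n m a b : ℝ} (hn : 0 < n) (hnm : n + 1 ≤ m) (hna : n + 1 ≤ a)
    (hab : a ≤ b) : (1 / a - 1 / b) ^ 2 ≤ 1 / n - 1 / m := by
  have ha : 0 < a := by linarith
  have hb : 0 < b := ha.trans_le hab
  calc (1 / a - 1 / b) ^ 2 ≤ (1 / a) ^ 2 := by
        gcongr
        · exact sub_nonneg.mpr (one_div_le_one_div_of_le ha hab)
        · exact sub_le_self _ (by positivity)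
  _ ≤ 1 / (n * (n + 1)) := by
        rw [div_pow, one_pow]
        gcongr
        nlinarith
  _ = 1 / n - 1 / (n + 1) := by field_simp; ring
  _ ≤ 1 / n - 1 / m := by gcongr

lemma le_rpow_of_sq_le {s t r : ℝ} (hs : 0 ≤ s) (hs1 : s ≤ 1) (hst : s ^ 2 ≤ t) (hr : 0 ≤ r)
    (hr2 : r ≤ 1 / 2) : s ≤ t ^ r := by
  calc s = s ^ (1 : ℝ) := (rpow_one s).symm
  _ ≤ s ^ (2 * r) := rpow_le_rpow_of_exponent_ge' hs hs1 (by positivity) (by linarith)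
  _ = (s ^ 2) ^ r := by rw [rpow_mul hs]; norm_cast
  _ ≤ t ^ r := rpow_le_rpow (by positivity) hst hr

lemma p_pos (n : ℕ) : 0 < p n := (Nat.prime_nth_prime _).pos

lemma add_one_le_p {n : ℕ} (hn : 1 ≤ n) : n + 1 ≤ p n := by
  have := Nat.add_two_le_nth_prime (n - 1)
  rw [p]; omega

lemma p_add_sub_le {n m : ℕ} (hn : 1 ≤ n) (hnm : n ≤ m) : p n + (m - n) ≤ p m := by
  have : m - n + Nat.nth Nat.Prime (n - 1) ≤ Nat.nth Nat.Prime (m - n + (n - 1)) :=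
    (Nat.nth_strictMono Nat.infinite_setOfPred_prime).add_le_nat _ _
  rw [p, p, show m - 1 = m - n + (n - 1) by omega]; omega

lemma p_lt_p {n m : ℕ} (hn : 1 ≤ n) (hnm : n < m) : p n < p m := by
  have := p_add_sub_le hn hnm.le; omega

lemma primeCounting_p {n : ℕ} (hn : 1 ≤ n) : (p n).primeCounting = n := by
  rw [Nat.primeCounting, Nat.primeCounting', Nat.count_succ, ← Nat.primeCounting', p,
    Nat.primeCounting'_nth_eq, if_pos (Nat.prime_nth_prime _)]
  omega

lemma exists_p_le_mul_rpow {δ : ℝ} (hδ : 0 < δ) :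
    ∃ A : ℝ, ∀ n : ℕ, 1 ≤ n → (p n : ℝ) ≤ A * (n : ℝ) ^ (1 + δ) := by
  refine ⟨(4 / log 2 * (1 + δ) / δ) ^ (1 + δ), fun n hn => ?_⟩
  have hp : 2 ≤ p n := (add_one_le_p hn).trans' (by omega)
  have hlog2 : 0 < log 2 := log_pos one_lt_two
  have hcheb := mul_log_two_le_four_mul_primeCounting_mul_log hp
  rw [primeCounting_p hn] at hcheb
  have key : (p n : ℝ) ≤ 4 / log 2 * n * log (p n) := by
    rw [div_mul_eq_mul_div, div_mul_eq_mul_div, le_div_iff₀ hlog2]; linarith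
  calc (p n : ℝ) ≤ (4 / log 2 * n * (1 + δ) / δ) ^ (1 + δ) :=
        le_rpow_of_le_mul_log (by positivity) (by positivity) hδ key
  _ = _ := by rw [← mul_rpow (by positivity) (by positivity)]; ring_nf

lemma one_div_p_sub_one_div_p_le_rpow {n m : ℕ} {r : ℝ} (hn : 1 ≤ n) (hnm : n < m) (hr : 0 ≤ r)
    (hr2 : r ≤ 1 / 2) : (1 : ℝ) / p n - 1 / p m ≤ (1 / n - 1 / m) ^ r := by
  have hpn : (n : ℝ) + 1 ≤ p n := mod_cast add_one_le_p hn
  have hpm : (p n : ℝ) ≤ p m := mod_cast (p_lt_p hn hnm).le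
  have hpn0 : (0 : ℝ) < p n := mod_cast p_pos n
  refine le_rpow_of_sq_le ?_ ?_ ?_ hr hr2
  · exact sub_nonneg.mpr (one_div_le_one_div_of_le hpn0 hpm)
  · calc (1 : ℝ) / p n - 1 / p m ≤ 1 / p n := sub_le_self _ (by positivity)
    _ ≤ 1 := (div_le_one hpn0).mpr (by linarith)
  · exact sq_one_div_sub_one_div_le (by positivity) (mod_cast hnm) hpn hpm

lemma exists_rpow_one_add_le_mul_one_div_p_sub {ε : ℝ} (hε : 0 < ε) :
    ∃ C : ℝ, 1 ≤ C ∧ ∀ m n : ℕ, 1 ≤ n → n < m →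
      ((1 : ℝ) / n - 1 / m) ^ (1 + ε) ≤ C * (1 / p n - 1 / p m) := by
  obtain ⟨A, hA⟩ := exists_p_le_mul_rpow (half_pos hε)
  have hA1 : 1 ≤ A := by
    have h1 := hA 1 le_rfl
    have h2 : (2 : ℝ) ≤ p 1 := mod_cast add_one_le_p le_rfl
    rw [Nat.cast_one, one_rpow, mul_one] at h1
    linarith
  refine ⟨A ^ 2, one_le_pow₀ hA1, fun m n hn hnm => ?_⟩
  have hn0 : (0 : ℝ) < n := by positivity
  have hnm' : (n : ℝ) < m := mod_cast hnm
  set t : ℝ := 1 / n - 1 / m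
  have ht0 : 0 < t := sub_pos.mpr (one_div_lt_one_div_of_lt hn0 hnm')
  have htn : t ≤ 1 / n := sub_le_self _ (by positivity)
  have hnε : (n : ℝ) ^ ε = (n ^ (ε / 2)) ^ 2 := by
    rw [← rpow_natCast, ← rpow_mul hn0.le]; ring_nf
  have hcmp : t ≤ (A * n ^ (ε / 2)) ^ 2 * (1 / p n - 1 / p m) := by
    refine one_div_sub_one_div_le_sq_mul hn0 hnm'.le ?_ ?_ ?_
    · exact_mod_cast (Nat.le_succ n).trans (add_one_le_p hn)
    · have := p_add_sub_le hn hnm.le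
      rw [← Nat.cast_sub hnm.le]; exact_mod_cast this
    · calc (p n : ℝ) ≤ A * n ^ (1 + ε / 2) := hA n hn
      _ = A * n ^ (ε / 2) * n := by rw [rpow_add hn0, rpow_one]; ring
  calc t ^ (1 + ε) = t * t ^ ε := by rw [rpow_add ht0, rpow_one]
  _ ≤ t * (1 / n) ^ ε := by gcongr
  _ = t / n ^ ε := by rw [div_rpow zero_le_one hn0.le, one_rpow]; ring
  _ ≤ A ^ 2 * (1 / p n - 1 / p m) := by
    rw [div_le_iff₀ (by positivity), hnε]
    linarith [hcmp, show (A * n ^ (ε / 2)) ^ 2 = A ^ 2 * (n ^ (ε / 2)) ^ 2 by ring]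

theorem stmt_7 :
    ∀ ε : ℝ, 0 < ε → ∃ C : ℝ, 0 < C ∧ ∀ m n : ℕ, 1 ≤ n → n < m →
      C⁻¹ * |(1 : ℝ) / n - 1 / m| ^ (1 + ε) ≤ |(1 : ℝ) / p n - 1 / p m| ∧
      |(1 : ℝ) / p n - 1 / p m| ≤ C * |(1 : ℝ) / n - 1 / m| ^ (0.475 : ℝ) := by
  intro ε hε
  obtain ⟨C, hC1, hlower⟩ := exists_rpow_one_add_le_mul_one_div_p_sub hε
  refine ⟨C, by positivity, fun m n hn hnm => ?_⟩
  have hn0 : (0 : ℝ) < n := by positivity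
  have hpn0 : (0 : ℝ) < p n := mod_cast p_pos n
  have ht : 0 < (1 : ℝ) / n - 1 / m := sub_pos.mpr (one_div_lt_one_div_of_lt hn0 (mod_cast hnm))
  have hs : 0 < (1 : ℝ) / p n - 1 / p m :=
    sub_pos.mpr (one_div_lt_one_div_of_lt hpn0 (mod_cast p_lt_p hn hnm))
  rw [abs_of_pos ht, abs_of_pos hs, inv_mul_le_iff₀ (by positivity)]
  refine ⟨hlower m n hn hnm, ?_⟩
  calc (1 : ℝ) / p n - 1 / p m ≤ (1 / n - 1 / m) ^ (0.475 : ℝ) :=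
        one_div_p_sub_one_div_p_le_rpow hn hnm (by norm_num) (by norm_num)
  _ ≤ C * (1 / n - 1 / m) ^ (0.475 : ℝ) := le_mul_of_one_le_left (by positivity) hC1
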